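/- arXiv:2408.13481 — 3 statements merged into one kernel-verified Lean document; each statement's English description precedes it below -/
import Mathlib

section
/- Let n be a positive integer, p a prime dividing n, write n = p·n', and let c be a nonnegative integer with p ∤ c. Then the sum over i from 1 to n−1 with p ∤ (n−i) of ⌊(c+i)/n⌋ equals c − ⌊c/p⌋. -/
/-!
Since `p ∣ n`, the condition `p ∤ n - i` is just `p ∤ i`, and it excludes `i = 0`. By Hermite's
identity `∑_{0 ≤ i < n} ⌊(c + i)/n⌋ = c` the sum over all `i < n` is `c`, while the multiples
`i = p j` contribute `∑_{j < n/p} ⌊(⌊c/p⌋ + j)/(n/p)⌋ = ⌊c/p⌋`, Hermite's identity again.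
-/

open Finset

theorem Nat.sum_range_add_div {n : ℕ} (hn : 0 < n) (c : ℕ) :
    ∑ i ∈ range n, (c + i) / n = c := by
  induction c with
  | zero => exact sum_eq_zero fun i hi => by simpa using Nat.div_eq_of_lt (mem_range.mp hi)
  | succ c ih =>
    have shift := sum_range_succ' (fun i => (c + i) / n) n
    rw [sum_range_succ, ih, Nat.add_div_right c hn] at shift
    simp only [← add_assoc, add_zero, add_right_comm c _ 1] at shift
    omega

theorem Nat.filter_range_mul_dvd {p : ℕ} (hp : 0 < p) (m : ℕ) :
    {i ∈ range (p * m) | p ∣ i} = (range m).image (p * ·) := by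
  ext i
  simp only [mem_filter, mem_range, mem_image]
  constructor
  · rintro ⟨hi, j, rfl⟩
    exact ⟨j, Nat.lt_of_mul_lt_mul_left hi, rfl⟩
  · rintro ⟨j, hj, rfl⟩
    exact ⟨Nat.mul_lt_mul_of_pos_left hj hp, dvd_mul_right p j⟩

theorem Nat.sum_filter_range_mul_dvd_add_div {p m : ℕ} (hp : 0 < p) (hm : 0 < m) (c : ℕ) :
    ∑ i ∈ range (p * m) with p ∣ i, (c + i) / (p * m) = c / p := by
  rw [Nat.filter_range_mul_dvd hp, sum_image fun a _ b _ h => Nat.eq_of_mul_eq_mul_left hp h]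
  have regroup (j : ℕ) : (c + p * j) / (p * m) = (c / p + j) / m := by
    rw [← Nat.div_div_eq_div_mul, Nat.add_mul_div_left c j hp]
  simp only [regroup]
  exact Nat.sum_range_add_div hm (c / p)

theorem Nat.filter_Ico_one_not_dvd_sub {p n : ℕ} (hpn : p ∣ n) :
    {i ∈ Ico 1 n | ¬ p ∣ n - i} = {i ∈ range n | ¬ p ∣ i} := by
  ext i
  simp only [mem_filter, mem_Ico, mem_range]
  constructor
  · rintro ⟨⟨-, hi⟩, h⟩
    exact ⟨hi, fun hpi => h (Nat.dvd_sub hpn hpi)⟩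
  · rintro ⟨hi, h⟩
    have hi0 : i ≠ 0 := by rintro rfl; exact h (dvd_zero p)
    refine ⟨⟨Nat.one_le_iff_ne_zero.mpr hi0, hi⟩, fun hpni => h ?_⟩
    simpa [Nat.sub_sub_self hi.le] using Nat.dvd_sub hpn hpni

theorem stmt_0_general (p n c : ℕ) (hn : 0 < n) (hpn : p ∣ n) :
    ∑ i ∈ (Finset.Ico 1 n).filter (fun i => ¬ p ∣ (n - i)), (c + i) / n = c - c / p := by
  rw [Nat.filter_Ico_one_not_dvd_sub hpn]
  obtain ⟨m, rfl⟩ := hpn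
  obtain ⟨hp, hm⟩ := CanonicallyOrderedAdd.mul_pos.mp hn
  have total := Nat.sum_range_add_div hn c
  rw [← sum_filter_add_sum_filter_not _ (p ∣ ·), Nat.sum_filter_range_mul_dvd_add_div hp hm] at total
  omega

/-- Krasner-type counting identity: for a prime `p` dividing `n` and `c ≥ 0` with `p ∤ c`,
`∑_{1 ≤ i ≤ n-1, p ∤ (n-i)} ⌊(c+i)/n⌋ = c - ⌊c/p⌋` (floor = natural division). -/
theorem stmt_0 (p n c : ℕ) (hp : p.Prime) (hn : 0 < n) (hpn : p ∣ n) (hc : ¬ p ∣ c) :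
    ∑ i ∈ (Finset.Ico 1 n).filter (fun i => ¬ p ∣ (n - i)), (c + i) / n = c - c / p :=
  stmt_0_general p n c hn hpn
end

section
/- Let L/K be a finite separable extension of complete discretely valued fields of degree n with discriminant exponent d_L, let α₁, …, α_n be the conjugates in an algebraic closure of a generator α of O_L over O_K. Then for any two indices i ≠ j, n·ord(αᵢ − α_j) ≤ d_L, where ord is the valuation extending the normalized valuation of K. -/
/-!
If `αᵢ = αⱼ` the discriminant vanishes. Otherwise, for each `l`, an automorphism `σₗ` with
`σₗ αᵢ = αₗ` sends `αⱼ` to some `α_{m l}` with `m l ≠ l`, and `v (αₗ - α_{m l}) = v (αᵢ - αⱼ)`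
by invariance. The `n` pairs `(m l, l)` are distinct off-diagonal pairs, and every other factor
of the discriminant has valuation at most `1` since the `αₖ` are integral.
-/

open Finset

theorem Finset.prod_offDiag_le_pow_of_le_one {ι M : Type*} [Fintype ι] [DecidableEq ι]
    [CommMonoid M] [Preorder M] [MulLeftMono M] {f : ι × ι → M} (hf : ∀ q, f q ≤ 1)
    {m : ι → ι} (hm : ∀ l, m l ≠ l) {c : M} (hc : ∀ l, f (m l, l) = c) :
    ∏ q ∈ univ.offDiag, f q ≤ c ^ Fintype.card ι := by
  have hsub : univ.image (fun l => (m l, l)) ⊆ univ.offDiag := by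
    simp [subset_iff, hm]
  calc ∏ q ∈ univ.offDiag, f q
      ≤ ∏ q ∈ univ.image (fun l => (m l, l)), f q :=
        prod_le_prod_of_subset_of_le_one' hsub fun q _ _ => hf q
    _ = ∏ l, f (m l, l) := prod_image fun a _ b _ h => congrArg Prod.snd h
    _ = c ^ Fintype.card ι := by simp [hc]

theorem exists_partner_valuation_sub_eq {K Ω : Type*} [Field K] [Field Ω] [Algebra K Ω]
    (v : Valuation Ω NNReal) {n : ℕ} {α : Fin n → Ω}
    (hinv : ∀ (σ : Ω ≃ₐ[K] Ω) (x : Ω), v (σ x) = v x)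
    (hperm : ∀ σ : Ω ≃ₐ[K] Ω, ∃ π : Equiv.Perm (Fin n), ∀ k, σ (α k) = α (π k))
    (htrans : ∀ i j : Fin n, ∃ σ : Ω ≃ₐ[K] Ω, σ (α i) = α j)
    {i j : Fin n} (hij : α i ≠ α j) :
    ∃ m : Fin n → Fin n, ∀ l, m l ≠ l ∧ v (α l - α (m l)) = v (α i - α j) := by
  choose σ hσ using htrans i
  choose π hπ using hperm
  refine ⟨fun l => π (σ l) j, fun l => ⟨fun h => hij ?_, ?_⟩⟩
  · apply (σ l).injective
    rw [hσ, hπ]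
    exact congrArg α h.symm
  · rw [← hσ l, ← hπ, ← map_sub, hinv]

theorem stmt_10_general (K Ω : Type*) [Field K] [Field Ω] [Algebra K Ω]
    (v : Valuation Ω NNReal) (n : ℕ) (α : Fin n → Ω)
    (hint : ∀ k, v (α k) ≤ 1)
    (hinv : ∀ (σ : Ω ≃ₐ[K] Ω) (x : Ω), v (σ x) = v x)
    (hperm : ∀ σ : Ω ≃ₐ[K] Ω, ∃ π : Equiv.Perm (Fin n), ∀ k, σ (α k) = α (π k))
    (htrans : ∀ i j : Fin n, ∃ σ : Ω ≃ₐ[K] Ω, σ (α i) = α j)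
    (i j : Fin n) (hij : i ≠ j) :
    v (∏ q ∈ Finset.univ.offDiag, (α q.2 - α q.1)) ≤ v (α i - α j) ^ n := by
  by_cases hαij : α i = α j
  · have hzero : ∏ q ∈ Finset.univ.offDiag, (α q.2 - α q.1) = 0 :=
      Finset.prod_eq_zero (i := (i, j)) (by simpa using hij) (by simp [hαij])
    simp [hzero]
  obtain ⟨m, hm⟩ := exists_partner_valuation_sub_eq v hinv hperm htrans hαij
  rw [map_prod]
  simpa using Finset.prod_offDiag_le_pow_of_le_one (f := fun q => v (α q.2 - α q.1))
    (fun q => v.map_sub_le (hint _) (hint _)) (fun l => (hm l).1) (fun l => (hm l).2)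

/-- Let `α₁, …, αₙ ∈ Ω` be the (integral, pairwise conjugate) conjugates of a generator
of `O_L` over `O_K`, and let `v` be a (multiplicative, rank-one) valuation on `Ω`
invariant under `K`-automorphisms, extending the normalized valuation of `K`. The
discriminant exponent `d_L` is `ord(∏_{k≠l}(α_l − α_k))`. Then for all `i ≠ j`,
`n·ord(αᵢ − α_j) ≤ d_L`; multiplicatively, `v(disc) ≤ v(αᵢ − α_j)ⁿ`. -/
theorem stmt_10 (K Ω : Type*) [Field K] [Field Ω] [Algebra K Ω]
    (v : Valuation Ω NNReal) (n : ℕ) (hn : 0 < n) (α : Fin n → Ω)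
    (hint : ∀ k, v (α k) ≤ 1)
    (hinv : ∀ (σ : Ω ≃ₐ[K] Ω) (x : Ω), v (σ x) = v x)
    (hperm : ∀ σ : Ω ≃ₐ[K] Ω, ∃ π : Equiv.Perm (Fin n), ∀ k, σ (α k) = α (π k))
    (htrans : ∀ i j : Fin n, ∃ σ : Ω ≃ₐ[K] Ω, σ (α i) = α j)
    (i j : Fin n) (hij : i ≠ j) :
    v (∏ q ∈ Finset.univ.offDiag, (α q.2 - α q.1)) ≤ v (α i - α j) ^ n :=
  stmt_10_general K Ω v n α hint hinv hperm htrans i j hij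
end

section
/- The Jacobian determinant of the elementary symmetric polynomials: det(∂sⱼ/∂xᵢ)_{1≤i,j≤n} = ∏_{i<j} (xᵢ − x_j), where s₁,…,s_n are the elementary symmetric polynomials in x₁,…,x_n. -/
/-!
`∂s_{k+1}/∂xᵢ` is the `k`-th elementary symmetric polynomial in the variables other than `xᵢ`,
so by Vieta's formula row `i` of the Jacobian `J` pairs with the column `((-1)ᵏ x_l^{n-1-k})ₖ`
to give `∏_{m ≠ i} (x_l - x_m)`, which vanishes unless `l = i`. These columns form a
(projective) Vandermonde matrix `V` with `det V = ∏_{i<j} (x_j - x_i)`, and `J V` is diagonal, so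
`det J · ∏_{i<j} (x_j - x_i) = ∏_{i ≠ m} (x_i - x_m) = ∏_{i<j} (x_i - x_j) · ∏_{i<j} (x_j - x_i)`.
Cancelling the nonzero Vandermonde determinant gives the result.
-/

open Finset Matrix

namespace Multiset

theorem esymm_cons_succ {R : Type*} [CommSemiring R] (a : R) (s : Multiset R) (k : ℕ) :
    (a ::ₘ s).esymm (k + 1) = a * s.esymm k + s.esymm (k + 1) := by
  simp only [esymm, powersetCard_cons, map_add, sum_add, map_map, Function.comp_def, prod_cons,
    sum_map_mul_left]
  ring

theorem prod_map_sub_eq_sum_esymm {ι R : Type*} [CommRing R] (s : Multiset ι) (f : ι → R)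
    (x : R) :
    (s.map fun i => x - f i).prod =
      ∑ j ∈ Finset.range (card s + 1), (-1) ^ j * (s.map f).esymm j * x ^ (card s - j) := by
  have := congrArg (Polynomial.eval x) (s.map f).prod_X_sub_X_eq_sum_esymm
  simpa [Polynomial.eval_multiset_prod, Polynomial.eval_finsetSum, mul_assoc] using this

end Multiset

theorem Finset.prod_filter_lt_eq_prod_prod_Ioi {α M : Type*} [Fintype α] [LinearOrder α]
    [LocallyFiniteOrderTop α] [CommMonoid M] (f : α → α → M) :
    ∏ q ∈ univ.filter (fun q : α × α => q.1 < q.2), f q.1 q.2 = ∏ i, ∏ j ∈ Ioi i, f i j :=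
  prod_finset_product' _ _ _ (by simp)

namespace MvPolynomial

theorem pderiv_esymm_map_X_of_notMem {σ R : Type*} [CommSemiring R] {i : σ} {s : Multiset σ}
    (hi : i ∉ s) (k : ℕ) : pderiv i ((s.map (X : σ → MvPolynomial σ R)).esymm k) = 0 := by
  induction s using Multiset.induction_on generalizing k with
  | empty => cases k <;> simp [Multiset.esymm, Multiset.powersetCard_zero_right]
  | cons a s ih =>
    rw [Multiset.mem_cons, not_or] at hi
    cases k with
    | zero => simp [Multiset.esymm]
    | succ k =>
      rw [Multiset.map_cons, Multiset.esymm_cons_succ, map_add, Derivation.leibniz, ih hi.2,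
        ih hi.2, pderiv_X_of_ne (Ne.symm hi.1)]
      simp

theorem pderiv_esymm_succ {σ R : Type*} [CommSemiring R] [Fintype σ] [DecidableEq σ]
    (i : σ) (k : ℕ) :
    pderiv i (esymm σ R (k + 1)) = ((univ.erase i).val.map X).esymm k := by
  rw [esymm_eq_multiset_esymm, ← insert_erase (mem_univ i),
    insert_val_of_notMem (notMem_erase i _), Multiset.map_cons, Multiset.esymm_cons_succ,
    map_add, Derivation.leibniz, pderiv_esymm_map_X_of_notMem (notMem_erase i _),
    pderiv_esymm_map_X_of_notMem (notMem_erase i _), pderiv_X_self]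
  simp

variable {R : Type*} [CommRing R] {n : ℕ}

theorem jacobian_esymm_mul_projVandermonde :
    (Matrix.of fun i j : Fin n => pderiv i (esymm (Fin n) R (j + 1))) *
        (projVandermonde (fun _ => -1) X)ᵀ =
      diagonal fun i => ∏ m ∈ {i}ᶜ, (X i - X m) := by
  refine Matrix.ext fun i l => ?_
  have vieta : ∑ j : Fin n,
      pderiv i (esymm (Fin n) R (j + 1)) * ((-1) ^ (j : ℕ) * X l ^ (j.rev : ℕ)) =
        ∏ m ∈ {i}ᶜ, (X l - X m) := by
    have hcard : #(univ.erase i) = n - 1 := by simp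
    rw [compl_singleton, prod_eq_multiset_prod, Multiset.prod_map_sub_eq_sum_esymm, card_val,
      hcard, Nat.sub_add_cancel i.pos, ← Fin.sum_univ_eq_sum_range]
    refine sum_congr rfl fun j _ => ?_
    rw [pderiv_esymm_succ, Fin.val_rev, Nat.sub_sub, add_comm 1, mul_left_comm, mul_assoc]
  rw [mul_apply]
  simp only [of_apply, transpose_apply, projVandermonde_apply, vieta]
  rcases eq_or_ne i l with rfl | hil
  · rw [diagonal_apply_eq]
  · rw [diagonal_apply_ne _ hil]
    exact prod_eq_zero (mem_compl.2 (notMem_singleton.2 hil.symm)) (sub_self (X l))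

theorem det_projVandermonde_neg_one_X :
    (projVandermonde (fun _ => -1) (X : Fin n → MvPolynomial (Fin n) R)).det =
      ∏ i, ∏ j ∈ Ioi i, (X j - X i) := by
  simp [det_projVandermonde, neg_add_eq_sub]

end MvPolynomial

open MvPolynomial in
/-- Jacobian determinant of the elementary symmetric polynomials:
`det(∂sⱼ/∂xᵢ) = ∏_{i<j} (xᵢ − x_j)` in `ℤ[x₁,…,xₙ]`. -/
theorem stmt_13 (n : ℕ) :
    (Matrix.of fun i j : Fin n =>
        MvPolynomial.pderiv i (MvPolynomial.esymm (Fin n) ℤ (j + 1))).det =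
      ∏ q ∈ Finset.univ.filter (fun q : Fin n × Fin n => q.1 < q.2),
        (MvPolynomial.X q.1 - MvPolynomial.X q.2) := by
  have hV : (projVandermonde (fun _ => -1) (X : Fin n → MvPolynomial (Fin n) ℤ)).det ≠ 0 := by
    rw [det_projVandermonde_neg_one_X]
    exact prod_ne_zero_iff.2 fun i _ => prod_ne_zero_iff.2 fun j hj =>
      sub_ne_zero.2 (X_injective.ne (mem_Ioi.1 hj).ne')
  refine mul_right_cancel₀ hV ?_
  rw [← det_transpose (projVandermonde _ _), ← det_mul, jacobian_esymm_mul_projVandermonde,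
    det_diagonal, det_transpose, det_projVandermonde_neg_one_X,
    prod_filter_lt_eq_prod_prod_Ioi (fun a b => X a - X b),
    ← prod_prod_Ioi_mul_eq_prod_prod_off_diag (fun a b => X b - X a)]
  simp_rw [prod_mul_distrib]
end
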